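/- The Plato space Π(ℝ*₊×ℝᵈ) is not closed in the configuration space Γ(ℝ*₊×ℝᵈ) with the vague topology: there exists a sequence γ⁽ⁿ⁾ ∈ Π converging vaguely (i.e. ⟨f,γ⁽ⁿ⁾⟩ → ⟨f,γ⟩ for all f ∈ C_c) to a configuration γ ∈ Γ \ Π. -/

import Mathlib

open Set Topology Filter
open scoped Classical

noncomputable section

/-- The position space `ℝᵈ`. -/
abbrev RD (d : ℕ) := Fin d → ℝ

/-- A point of `Y = (0,∞) × ℝᵈ`, encoded in `ℝ × ℝᵈ` (positivity is a side condition). -/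
abbrev Pt (d : ℕ) := ℝ × RD d

/-- All marks of the configuration are positive, i.e. `γ ⊆ (0,∞) × ℝᵈ`. -/
def PtsPos {d : ℕ} (γ : Set (Pt d)) : Prop := ∀ p ∈ γ, 0 < p.1

/-- Local finiteness: finitely many points in every compact subset of `Y = (0,∞) × ℝᵈ`. -/
def LocFinite {d : ℕ} (γ : Set (Pt d)) : Prop :=
  ∀ K : Set (Pt d), IsCompact K → K ⊆ {p : Pt d | 0 < p.1} → (γ ∩ K).Finite

/-- Pinpointing: at most one mark `s` over each position `x`. -/
def Pinpointing {d : ℕ} (γ : Set (Pt d)) : Prop :=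
  ∀ s₁ s₂ : ℝ, ∀ x : RD d, (s₁, x) ∈ γ → (s₂, x) ∈ γ → s₁ = s₂

/-- The local mass of a configuration on `Λ ⊆ ℝᵈ`: `∑_{(s,x) ∈ γ} s · 1_Λ(x)`. -/
def localMass {d : ℕ} (γ : Set (Pt d)) (Λ : Set (RD d)) : ENNReal :=
  ∑' p : {p : Pt d // p ∈ γ ∧ p.2 ∈ Λ}, ENNReal.ofReal p.val.1

/-- Finite local mass on every compact `Λ ⊆ ℝᵈ`. -/
def FiniteLocalMass {d : ℕ} (γ : Set (Pt d)) : Prop :=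
  ∀ Λ : Set (RD d), IsCompact Λ → localMass γ Λ < ⊤

/-- The Plato space `Π((0,∞) × ℝᵈ)`: locally finite pinpointing configurations
with finite local mass. -/
def Plato {d : ℕ} (γ : Set (Pt d)) : Prop :=
  PtsPos γ ∧ LocFinite γ ∧ Pinpointing γ ∧ FiniteLocalMass γ

/-- The reflection map `R`: `R(γ) = ∑_{(s,x) ∈ γ} s δ_x`, encoded via the weight function
`x ↦ (R γ)({x})` of the resulting discrete measure. -/
def reflect {d : ℕ} (γ : Set (Pt d)) : RD d → ℝ :=
  fun x =>
    letI := Classical.propDecidable (∃ s : ℝ, (s, x) ∈ γ)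
    if h : ∃ s : ℝ, (s, x) ∈ γ then h.choose else 0

/-- The cone `K(ℝᵈ)` of positive discrete Radon measures `η = ∑ᵢ sᵢ δ_{xᵢ}`, encoded by
weight functions `m x = η({x})`: nonnegative, countably many atoms, finite mass on compacts. -/
def InCone {d : ℕ} (m : RD d → ℝ) : Prop :=
  (∀ x, 0 ≤ m x) ∧ {x | m x ≠ 0}.Countable ∧
    ∀ Λ : Set (RD d), IsCompact Λ → (∑' x : Λ, ENNReal.ofReal (m x)) < ⊤

/-- The relation `ξ ⊂ η` on the cone: `τ(ξ) ⊆ τ(η)` and `s_x(ξ) = s_x(η)` on `τ(ξ)`. -/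
def ConeLE {d : ℕ} (ξ η : RD d → ℝ) : Prop :=
  ∀ x, ξ x ≠ 0 → ξ x = η x


/-! The pinpointing configurations `{(1, xₙ), (2, 0)}` with `xₙ ≠ 0`, `xₙ → 0` converge vaguely
to `{(1, 0), (2, 0)}`, which carries two marks over the origin. -/

theorem tsum_pair {α β : Type*} [AddCommMonoid β] [TopologicalSpace β] (f : α → β) {a b : α}
    (hab : a ≠ b) : ∑' z : ({a, b} : Set α), f z = f a + f b := by
  classical
  rw [← Finset.coe_pair, Finset.tsum_subtype', Finset.sum_pair hab]

theorem tendsto_tsum_pair {ι α β : Type*} [TopologicalSpace α] [AddCommMonoid β]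
    [TopologicalSpace β] [ContinuousAdd β] {f : α → β} {l : Filter ι} {p : ι → α} {a q : α}
    (hf : ContinuousAt f a) (hp : Tendsto p l (𝓝 a)) (hpq : ∀ n, p n ≠ q) (haq : a ≠ q) :
    Tendsto (fun n => ∑' z : ({p n, q} : Set α), f z) l (𝓝 (∑' z : ({a, q} : Set α), f z)) := by
  simp only [tsum_pair f (hpq _), tsum_pair f haq]
  exact (hf.tendsto.comp hp).add tendsto_const_nhds

theorem exists_seq_ne_zero_tendsto_zero {E : Type*} [NormedAddCommGroup E] [NormedSpace ℝ E]
    [Nontrivial E] : ∃ x : ℕ → E, (∀ n, x n ≠ 0) ∧ Tendsto x atTop (𝓝 0) := by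
  obtain ⟨v, hv⟩ := exists_ne (0 : E)
  refine ⟨fun n => (1 / ((n : ℝ) + 1)) • v, fun n => smul_ne_zero (by positivity) hv, ?_⟩
  simpa using (tendsto_one_div_add_atTop_nhds_zero_nat (𝕜 := ℝ)).smul_const v

section Configurations

variable {d : ℕ}

theorem Set.Finite.locFinite {γ : Set (Pt d)} (hγ : γ.Finite) : LocFinite γ :=
  fun K _ _ => hγ.inter_of_left K

theorem Set.Finite.finiteLocalMass {γ : Set (Pt d)} (hγ : γ.Finite) : FiniteLocalMass γ := by
  intro Λ _
  have : Fintype {p : Pt d // p ∈ γ ∧ p.2 ∈ Λ} :=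
    (hγ.subset fun _ hp => hp.1).fintype
  rw [localMass, tsum_fintype]
  exact ENNReal.sum_lt_top.2 fun _ _ => ENNReal.ofReal_lt_top

theorem ptsPos_pair {s t : ℝ} (hs : 0 < s) (ht : 0 < t) (x y : RD d) :
    PtsPos ({(s, x), (t, y)} : Set (Pt d)) := by
  rintro p (rfl | rfl) <;> assumption

theorem pinpointing_pair {x y : RD d} (hxy : x ≠ y) (s t : ℝ) :
    Pinpointing ({(s, x), (t, y)} : Set (Pt d)) := by
  intro s₁ s₂ z h₁ h₂
  simp only [mem_insert_iff, mem_singleton_iff, Prod.mk.injEq] at h₁ h₂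
  rcases h₁ with ⟨rfl, rfl⟩ | ⟨rfl, rfl⟩ <;> rcases h₂ with ⟨rfl, h⟩ | ⟨rfl, h⟩ <;>
    first | rfl | exact (hxy h).elim | exact (hxy h.symm).elim

theorem not_pinpointing_pair {s t : ℝ} (hst : s ≠ t) (x : RD d) :
    ¬ Pinpointing ({(s, x), (t, x)} : Set (Pt d)) :=
  fun h => hst (h s t x (by simp) (by simp))

theorem plato_pair {s t : ℝ} (hs : 0 < s) (ht : 0 < t) {x y : RD d} (hxy : x ≠ y) :
    Plato ({(s, x), (t, y)} : Set (Pt d)) :=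
  ⟨ptsPos_pair hs ht x y, (toFinite _).locFinite, pinpointing_pair hxy s t,
    (toFinite _).finiteLocalMass⟩

end Configurations

/-- The Plato space is not closed in the configuration space with the vague
topology: some sequence of Plato configurations converges vaguely (tested against all
continuous compactly supported f on (0,∞)×ℝᵈ) to a locally finite configuration
outside the Plato space. -/
theorem plato_not_closed (d : ℕ) (hd : 1 ≤ d) :
    ∃ (γ : ℕ → Set (Pt d)) (γlim : Set (Pt d)),
      (∀ n, Plato (γ n)) ∧
      PtsPos γlim ∧ LocFinite γlim ∧
      ¬ (Pinpointing γlim ∧ FiniteLocalMass γlim) ∧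
      ∀ f : Pt d → ℝ, Continuous f → HasCompactSupport f →
        tsupport f ⊆ {p : Pt d | 0 < p.1} →
        Tendsto (fun n => ∑' p : (γ n : Set (Pt d)), f p.val) atTop
          (nhds (∑' p : (γlim : Set (Pt d)), f p.val)) := by
  have : Nonempty (Fin d) := ⟨⟨0, hd⟩⟩
  obtain ⟨x, hx0, hx⟩ := exists_seq_ne_zero_tendsto_zero (E := RD d)
  have h12 : (1 : ℝ) ≠ 2 := by norm_num
  refine ⟨fun n => {(1, x n), (2, 0)}, {(1, 0), (2, 0)},
    fun n => plato_pair one_pos two_pos (hx0 n), ptsPos_pair one_pos two_pos 0 0, (toFinite _).locFinite,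
    fun h => not_pinpointing_pair h12 0 h.1, fun f hf _ _ => ?_⟩
  exact tendsto_tsum_pair hf.continuousAt (tendsto_const_nhds.prodMk_nhds hx)
    (fun n h => h12 (congrArg Prod.fst h)) (fun h => h12 (congrArg Prod.fst h))
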